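/- For every integer m ≥ 1, the series Σ_{n≥0} φ³_{n,m} (27/256)^n converges and its sum equals Z³_m = (2(2m)! / (m!(m+2)!)) · (16/9)^m. -/
import Mathlib
open Finset


noncomputable def Praney (k n : ℕ) : ℝ :=
  (k + 1) * Nat.factorial (4 * n + k) /
    (Nat.factorial n * Nat.factorial (3 * n + k + 1))

lemma Praney_nonneg (k n : ℕ) : 0 ≤ Praney k n := by
  unfold Praney; positivity

lemma fact_cast_ne (n : ℕ) : (Nat.factorial n : ℝ) ≠ 0 := by
  exact_mod_cast (Nat.factorial_pos n).ne'

lemma fact_succ_cast (n : ℕ) : (Nat.factorial (n+1) : ℝ) = (n+1) * Nat.factorial n := by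
  rw [Nat.factorial_succ]; push_cast; ring

lemma Praney_zero (k : ℕ) : Praney k 0 = 1 := by
  unfold Praney
  norm_num
  rw [fact_succ_cast]
  have := fact_cast_ne k
  field_simp

lemma Praney_shift (n : ℕ) : Praney 0 (n+1) = Praney 3 n := by
  unfold Praney
  have e1 : 4 * (n+1) + 0 = (4*n+3) + 1 := by ring
  have e2 : 3 * (n+1) + 0 + 1 = (3*n+3) + 1 := by ring
  have e3 : 3 * n + 3 + 1 = (3*n+3)+1 := by ring
  have e4 : 4*n+3 = 4*n+3 := rfl
  rw [e1, e2, e3, fact_succ_cast, fact_succ_cast (n := 3*n+3), fact_succ_cast (n := n)]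
  push_cast
  have h1 := fact_cast_ne n
  have h2 := fact_cast_ne (4*n+3)
  have h3 := fact_cast_ne (3*n+3)
  field_simp
  ring

lemma Praney_pascal (k n : ℕ) :
    Praney (k+1) (n+1) = Praney k (n+1) + Praney (k+4) n := by
  unfold Praney
  have e1 : 4 * (n+1) + (k+1) = (4*n+k+4) + 1 := by ring
  have e2 : 3 * (n+1) + (k+1) + 1 = (3*n+k+4) + 1 := by ring
  have e3 : 4 * (n+1) + k = (4*n+k+3) + 1 := by ring
  have e4 : 3 * (n+1) + k + 1 = (3*n+k+3) + 1 := by ring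
  have e5 : 4 * n + (k+4) = ((4*n+k+3)) + 1 := by ring
  have e6 : 3 * n + (k+4) + 1 = ((3*n+k+4)) + 1 := by ring
  rw [e1, e2, e3, e4, e5, e6, fact_succ_cast, fact_succ_cast (n := 3*n+k+4),
    fact_succ_cast (n := 4*n+k+3), fact_succ_cast (n := 3*n+k+3), fact_succ_cast (n := n)]
  push_cast
  have h1 := fact_cast_ne n
  have h2 := fact_cast_ne (4*n+k+3)
  have h3 := fact_cast_ne (3*n+k+3)
  have h4 : (3*n+k+4 : ℝ) ≠ 0 := by positivity
  have h5 : (n+1 : ℝ) ≠ 0 := by positivity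
  field_simp
  ring

lemma Praney_conv : ∀ n r, (∑ i ∈ range (n+1), Praney r i * Praney 0 (n-i)) = Praney (r+1) n := by
  intro n
  induction n using Nat.strong_induction_on with
  | _ n ih =>
    match n with
    | 0 => intro r; simp [Praney_zero]
    | Nat.succ n =>
      have shift_sum : ∀ s, (∑ i ∈ range (n+2), Praney s i * Praney 0 (n+1-i))
          = Praney s 0 * Praney 0 (n+1) + ∑ i ∈ range (n+1), Praney s (i+1) * Praney 0 (n-i) := by
        intro s
        rw [Finset.sum_range_succ' (fun i => Praney s i * Praney 0 (n+1-i)) (n+1)]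
        rw [add_comm]
        simp only [Nat.succ_sub_succ, Nat.sub_zero]
      intro r
      induction r with
      | zero =>
        rw [shift_sum 0]
        have : ∀ i ∈ range (n+1), Praney 0 (i+1) * Praney 0 (n-i) = Praney 3 i * Praney 0 (n-i) := by
          intro i _; rw [Praney_shift]
        rw [Finset.sum_congr rfl this, ih n (lt_add_one n) 3, Praney_zero, one_mul]
        rw [Praney_pascal 0 n]
      | succ r ihr =>
        rw [shift_sum (r+1)]
        have : ∀ i ∈ range (n+1), Praney (r+1) (i+1) * Praney 0 (n-i)
            = Praney r (i+1) * Praney 0 (n-i) + Praney (r+4) i * Praney 0 (n-i) := by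
          intro i _; rw [Praney_pascal r i, add_mul]
        rw [Finset.sum_congr rfl this, Finset.sum_add_distrib,
          ih n (lt_add_one n) (r+4)]
        have hback : (∑ i ∈ range (n+1), Praney r (i+1) * Praney 0 (n-i))
            = Praney (r+1) (n+1) - Praney r 0 * Praney 0 (n+1) := by
          have := shift_sum r
          have h2 := ihr
          linarith [ihr, shift_sum r]
        rw [hback]
        simp only [Praney_zero, one_mul]
        rw [show n.succ = n+1 from rfl, Praney_pascal (r+1) n]
        ring

noncomputable def Araney (k n : ℕ) : ℝ := Praney k n * (27/256 : ℝ)^n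

lemma Araney_nonneg (k n : ℕ) : 0 ≤ Araney k n := by
  unfold Araney
  have := Praney_nonneg k n
  positivity

lemma Araney_conv (r n : ℕ) :
    Araney (r+1) n = ∑ i ∈ range (n+1), Araney r i * Araney 0 (n-i) := by
  unfold Araney
  rw [← Praney_conv n r, Finset.sum_mul]
  apply Finset.sum_congr rfl
  intro i hi
  have hin : i ≤ n := Nat.lt_succ_iff.mp (Finset.mem_range.mp hi)
  have : (27/256 : ℝ)^i * (27/256 : ℝ)^(n-i) = (27/256 : ℝ)^n := by
    rw [← pow_add, Nat.add_sub_cancel' hin]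
  calc Praney r i * Praney 0 (n-i) * (27/256 : ℝ)^n
      = Praney r i * Praney 0 (n-i) * ((27/256 : ℝ)^i * (27/256 : ℝ)^(n-i)) := by rw [this]
    _ = Praney r i * (27/256:ℝ)^i * (Praney 0 (n-i) * (27/256:ℝ)^(n-i)) := by ring

lemma Araney_shift (n : ℕ) : Araney 0 (n+1) = (27/256 : ℝ) * Araney 3 n := by
  unfold Araney
  rw [Praney_shift, pow_succ]
  ring

/-- double-sum rearrangement -/
lemma sum_conv_eq (u v : ℕ → ℝ) :
    ∀ N, (∑ n ∈ range N, ∑ i ∈ range (n+1), u i * v (n-i))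
      = ∑ i ∈ range N, u i * ∑ d ∈ range (N-i), v d := by
  intro N
  induction N with
  | zero => simp
  | succ N ih =>
    rw [Finset.sum_range_succ, ih, Finset.sum_range_succ (fun i => u i * ∑ d ∈ range (N+1-i), v d)]
    have h1 : (∑ i ∈ range N, u i * ∑ d ∈ range (N+1-i), v d)
        = ∑ i ∈ range N, (u i * ∑ d ∈ range (N-i), v d + u i * v (N-i)) := by
      apply Finset.sum_congr rfl
      intro i hi
      have hiN : i < N := Finset.mem_range.mp hi
      have : N + 1 - i = (N - i) + 1 := by omega
      rw [this, Finset.sum_range_succ]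
      ring
    rw [h1, Finset.sum_add_distrib]
    have h2 : N + 1 - N = 1 := by omega
    rw [h2, Finset.sum_range_succ (fun i => u i * v (N-i)), Nat.sub_self]
    simp [Finset.sum_range_one]
    ring

lemma sum_conv_le (u v : ℕ → ℝ) (hu : ∀ n, 0 ≤ u n) (hv : ∀ n, 0 ≤ v n) (N : ℕ) :
    (∑ n ∈ range N, ∑ i ∈ range (n+1), u i * v (n-i))
      ≤ (∑ i ∈ range N, u i) * (∑ j ∈ range N, v j) := by
  rw [sum_conv_eq, Finset.sum_mul]
  apply Finset.sum_le_sum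
  intro i _
  apply mul_le_mul_of_nonneg_left _ (hu i)
  apply Finset.sum_le_sum_of_subset_of_nonneg
  · exact Finset.range_subset_range.mpr (Nat.sub_le N i)
  · intro j _ _; exact hv j

lemma sumA_le (r N : ℕ) :
    (∑ n ∈ range N, Araney (r+1) n) ≤ (∑ n ∈ range N, Araney r n) * (∑ n ∈ range N, Araney 0 n) := by
  have : (∑ n ∈ range N, Araney (r+1) n)
      = ∑ n ∈ range N, ∑ i ∈ range (n+1), Araney r i * Araney 0 (n-i) := by
    apply Finset.sum_congr rfl; intro n _; exact Araney_conv r n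
  rw [this]
  exact sum_conv_le _ _ (Araney_nonneg r) (Araney_nonneg 0) N

lemma sumA0_nonneg (N : ℕ) : 0 ≤ ∑ n ∈ range N, Araney 0 n :=
  Finset.sum_nonneg fun n _ => Araney_nonneg 0 n

lemma sumA0_le : ∀ N, (∑ n ∈ range N, Araney 0 n) ≤ 4/3 := by
  intro N
  induction N with
  | zero => norm_num
  | succ N ih =>
    rw [Finset.sum_range_succ']
    have h0 : Araney 0 0 = 1 := by unfold Araney; rw [Praney_zero]; norm_num
    have hsh : (∑ i ∈ range N, Araney 0 (i+1)) = (27/256 : ℝ) * ∑ i ∈ range N, Araney 3 i := by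
      rw [Finset.mul_sum]; apply Finset.sum_congr rfl; intro i _; exact Araney_shift i
    rw [h0, hsh]
    have hQ := sumA0_nonneg N
    have n1 : (0:ℝ) ≤ ∑ n ∈ range N, Araney 1 n := Finset.sum_nonneg fun n _ => Araney_nonneg 1 n
    have n2 : (0:ℝ) ≤ ∑ n ∈ range N, Araney 2 n := Finset.sum_nonneg fun n _ => Araney_nonneg 2 n
    have hS1 : (∑ n ∈ range N, Araney 1 n) ≤ (∑ n ∈ range N, Araney 0 n) * (∑ n ∈ range N, Araney 0 n) := by
      simpa using sumA_le 0 N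
    have hS2 := sumA_le 1 N
    have hS3 := sumA_le 2 N
    have h3 : (∑ n ∈ range N, Araney 3 n) ≤ (∑ n ∈ range N, Araney 0 n)^4 := by
      calc (∑ n ∈ range N, Araney 3 n)
          ≤ (∑ n ∈ range N, Araney 2 n) * (∑ n ∈ range N, Araney 0 n) := by simpa using sumA_le 2 N
        _ ≤ ((∑ n ∈ range N, Araney 1 n) * (∑ n ∈ range N, Araney 0 n)) * (∑ n ∈ range N, Araney 0 n) := by
            apply mul_le_mul_of_nonneg_right _ hQ
            simpa using sumA_le 1 N
        _ ≤ (((∑ n ∈ range N, Araney 0 n) * (∑ n ∈ range N, Araney 0 n)) * (∑ n ∈ range N, Araney 0 n)) * (∑ n ∈ range N, Araney 0 n) := by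
            exact mul_le_mul_of_nonneg_right (mul_le_mul_of_nonneg_right hS1 hQ) hQ
        _ = (∑ n ∈ range N, Araney 0 n)^4 := by ring
    have h4 : (∑ n ∈ range N, Araney 0 n)^4 ≤ (4/3 : ℝ)^4 := pow_le_pow_left₀ hQ ih 4
    nlinarith [h3, h4]

lemma summableA0 : Summable (Araney 0) :=
  summable_of_sum_range_le (Araney_nonneg 0) sumA0_le

lemma norm_eq_A (r : ℕ) : (fun n => ‖Araney r n‖) = Araney r := by
  funext n; rw [Real.norm_eq_abs, abs_of_nonneg (Araney_nonneg r n)]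

lemma summableA_tsum : ∀ r, Summable (Araney r) ∧ (∑' n, Araney r n) = (∑' n, Araney 0 n)^(r+1) := by
  intro r
  induction r with
  | zero => exact ⟨summableA0, by rw [pow_one]⟩
  | succ r ih =>
    obtain ⟨hs, ht⟩ := ih
    have hfn : Summable (fun n => ‖Araney r n‖) := by rw [norm_eq_A]; exact hs
    have hgn : Summable (fun n => ‖Araney 0 n‖) := by rw [norm_eq_A]; exact summableA0
    have hconv : Summable (fun n => ∑ k ∈ range (n+1), Araney r k * Araney 0 (n-k)) :=
      (summable_norm_sum_mul_range_of_summable_norm hfn hgn).of_norm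
    have hsum : Summable (Araney (r+1)) := by
      apply hconv.congr; intro n; exact (Araney_conv r n).symm
    refine ⟨hsum, ?_⟩
    have := tsum_mul_tsum_eq_tsum_sum_range_of_summable_norm hfn hgn
    have h2 : (∑' n, ∑ k ∈ range (n+1), Araney r k * Araney 0 (n-k)) = ∑' n, Araney (r+1) n := by
      apply tsum_congr; intro n; exact (Araney_conv r n).symm
    rw [h2] at this
    rw [← this, ht]
    ring

lemma q_eq : (∑' n, Araney 0 n) = 4/3 := by
  set q := ∑' n, Araney 0 n with hq
  have hs := summableA0
  have h0 : Araney 0 0 = 1 := by unfold Araney; rw [Praney_zero]; norm_num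
  have hshift : (∑' n, Araney 0 (n+1)) = (27/256 : ℝ) * ∑' n, Araney 3 n := by
    rw [← tsum_mul_left]
    apply tsum_congr; intro n; exact Araney_shift n
  have h4 : (∑' n, Araney 3 n) = q^4 := by
    have := (summableA_tsum 3).2
    rw [this]
  have hqe : q = 1 + (27/256 : ℝ) * q^4 := by
    conv_lhs => rw [hq]
    rw [Summable.tsum_eq_zero_add hs, h0, hshift, h4]
  have hq0 : 0 ≤ q := tsum_nonneg (Araney_nonneg 0)
  have key : (3*q - 4)^2 * (3*q^2 + 8*q + 16) = 0 := by nlinarith [hqe]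
  have hpos : 0 < 3*q^2 + 8*q + 16 := by positivity
  have : (3*q - 4)^2 = 0 := by
    rcases mul_eq_zero.mp key with h | h
    · exact h
    · linarith
  have : 3*q - 4 = 0 := by
    exact pow_eq_zero_iff (n := 2) (by norm_num) |>.mp this
  linarith

lemma hasSumA (r : ℕ) : HasSum (Araney r) ((4/3 : ℝ)^(r+1)) := by
  obtain ⟨hs, ht⟩ := summableA_tsum r
  rw [q_eq] at ht
  rw [← ht]
  exact hs.hasSum

/-- The number of rooted type III triangulations of a disc with m+2 boundary
vertices and n internal vertices (for m ≥ 1). -/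
noncomputable def phi3 (n m : ℕ) : ℝ :=
  (2 * Nat.factorial (2 * m + 1) * Nat.factorial (4 * n + 2 * m - 1) : ℝ) /
    (Nat.factorial (m - 1) * Nat.factorial (m + 1) * Nat.factorial n *
      Nat.factorial (3 * n + 2 * m + 1))

/-- for m ≥ 1, Σ_n φ³_{n,m} (27/256)^n = 2(2m)!/(m!(m+2)!) · (16/9)^m. -/
theorem Z3_critical (m : ℕ) (hm : 1 ≤ m) :
    HasSum (fun n : ℕ => phi3 n m * (27 / 256 : ℝ) ^ n)
      (2 * (Nat.factorial (2 * m) : ℝ) / (Nat.factorial m * Nat.factorial (m + 2)) *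
        (16 / 9) ^ m) := by
  obtain ⟨m', rfl⟩ : ∃ m', m = m' + 1 := ⟨m - 1, by omega⟩
  set K : ℝ := 2 * Nat.factorial (2*m'+3) / (Nat.factorial m' * Nat.factorial (m'+2)) with hK
  set c1 : ℝ := K / ((m'+1) * (m'+3)) with hc1
  set c2 : ℝ := -(3 * K) / (2 * (m'+3) * (2*m'+3)) with hc2
  have h1 := hasSumA (2*m'+1)
  have h2 := hasSumA (2*m'+2)
  have hsum := (h1.mul_left c1).add (h2.mul_left c2)
  have hfun : (fun n => c1 * Araney (2*m'+1) n + c2 * Araney (2*m'+2) n)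
      = fun n : ℕ => phi3 n (m'+1) * (27 / 256 : ℝ) ^ n := by
    funext n
    unfold Araney Praney phi3
    have e1 : 4 * n + 2 * (m'+1) - 1 = 4*n + (2*m'+1) := by omega
    have e2 : m' + 1 - 1 = m' := by omega
    have e3 : 2 * (m'+1) + 1 = 2*m'+3 := by omega
    have e4 : 3 * n + 2 * (m'+1) + 1 = (3*n+2*m'+2) + 1 := by omega
    have e5 : 3 * n + (2*m'+1) + 1 = 3*n+2*m'+2 := by omega
    have e6 : 4 * n + (2*m'+2) = (4*n+2*m'+1) + 1 := by omega
    have e7 : 3 * n + (2*m'+2) + 1 = (3*n+2*m'+2) + 1 := by omega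
    have e8 : 4 * n + (2*m'+1) = 4*n+2*m'+1 := by omega
    rw [e1, e2, e3, e4, e5, e6, e7, e8, fact_succ_cast (n := 3*n+2*m'+2),
      fact_succ_cast (n := 4*n+2*m'+1)]
    rw [hc1, hc2, hK]
    have f1 := fact_cast_ne n
    have f2 := fact_cast_ne (3*n+2*m'+2)
    have f3 := fact_cast_ne (4*n+2*m'+1)
    have f4 := fact_cast_ne m'
    have f5 := fact_cast_ne (m'+2)
    have f6 := fact_cast_ne (2*m'+3)
    have g1 : ((m':ℝ)+1) ≠ 0 := by positivity
    have g2 : ((m':ℝ)+3) ≠ 0 := by positivity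
    have g3 : (2*(m':ℝ)+3) ≠ 0 := by positivity
    have g4 : (3*(n:ℝ)+2*m'+3) ≠ 0 := by positivity
    push_cast
    field_simp
    ring
  have hval : c1 * (4/3 : ℝ)^(2*m'+1+1) + c2 * (4/3 : ℝ)^(2*m'+2+1)
      = 2 * (Nat.factorial (2 * (m'+1)) : ℝ) / (Nat.factorial (m'+1) * Nat.factorial (m'+1+2)) *
        (16 / 9) ^ (m'+1) := by
    have p1 : (4/3 : ℝ)^(2*m'+1+1) = (16/9 : ℝ)^(m'+1) := by
      rw [show 2*m'+1+1 = 2*(m'+1) by ring, pow_mul]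
      norm_num
    have p2 : (4/3 : ℝ)^(2*m'+2+1) = (16/9 : ℝ)^(m'+1) * (4/3 : ℝ) := by
      rw [show 2*m'+2+1 = 2*(m'+1)+1 by ring, pow_succ, pow_mul]
      norm_num
    rw [p1, p2, hc1, hc2, hK]
    have e1 : 2 * (m'+1) = (2*m'+1) + 1 := by ring
    have e2 : 2*m'+3 = (2*m'+2) + 1 := by ring
    have e3 : 2*m'+2 = (2*m'+1) + 1 := by ring
    have e4 : m'+1+2 = (m'+2)+1 := by ring
    rw [e1, e2, e3, fact_succ_cast (n := 2*m'+2), fact_succ_cast (n := 2*m'+1),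
      fact_succ_cast (n := m'), e4, fact_succ_cast (n := m'+2)]
    have f1 := fact_cast_ne m'
    have f2 := fact_cast_ne (m'+2)
    have f3 := fact_cast_ne (2*m'+1)
    have g1 : ((m':ℝ)+1) ≠ 0 := by positivity
    have g2 : ((m':ℝ)+3) ≠ 0 := by positivity
    have g3 : (2*(m':ℝ)+3) ≠ 0 := by positivity
    have g5 : ((16:ℝ)/9)^(m'+1) ≠ 0 := by positivity
    push_cast
    field_simp
    ring
  rw [hfun, hval] at hsum
  exact hsum
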